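/- arXiv:1706.05423 — 2 statements merged into one kernel-verified Lean document; each statement's English description precedes it below -/
import Mathlib

section
/- Let Z ⊂ ℂ be a set of non-zero complex numbers and let 0 ≤ θ < 2π/3 be such that the angle between any two elements of Z is at most θ. Then 0 does not belong to the convex hull of Z (where Z is regarded as a subset of ℝ² = ℂ). -/
/-!
Measure every argument relative to a fixed `z₀ ∈ Z`. Since the three angles between `u`, `v`
and `z₀` add up to less than `2π`, the relative arguments of `u` and `v` differ by exactly the
argument of `u / v`, so all relative arguments lie in an interval of length `θ < π`. Rotating
the midpoint of that interval to the positive real axis puts `Z` in the open right half-plane,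
a convex set missing `0`.
-/

/-- The angle between two complex numbers, regarded as vectors in `ℝ² = ℂ`. -/
noncomputable def cangle (u v : ℂ) : ℝ :=
  Real.arccos ((u * (starRingEnd ℂ) v).re / (‖u‖ * ‖v‖))

open Complex Real Set

lemma cangle_eq_abs_arg {u v : ℂ} (hu : u ≠ 0) (hv : v ≠ 0) :
    cangle u v = |arg (u / v)| := by
  have hv' : ‖v‖ ≠ 0 := norm_ne_zero_iff.2 hv
  have hmul : u * (starRingEnd ℂ) v = u / v * (‖v‖ ^ 2 : ℝ) := by
    rw [ofReal_pow, ← mul_conj']; field_simp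
  have hre : (u * (starRingEnd ℂ) v).re / (‖u‖ * ‖v‖) = (u / v).re / ‖u / v‖ := by
    rw [hmul, re_mul_ofReal, norm_div, ← mul_div_mul_right _ (‖u‖ / ‖v‖) (pow_ne_zero 2 hv')]
    congr 1
    field_simp
  rw [cangle, hre, ← cos_arg (div_ne_zero hu hv)]
  rcases le_or_gt 0 (arg (u / v)) with h | h
  · rw [arccos_cos h (arg_le_pi _), abs_of_nonneg h]
  · rw [← Real.cos_neg, arccos_cos (by linarith) (by linarith [neg_pi_lt_arg (u / v)]),
      abs_of_neg h]

lemma Real.Angle.eq_of_coe_eq_of_abs_sub_lt_two_pi {x y : ℝ} (h : (x : Real.Angle) = y)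
    (hxy : |x - y| < 2 * π) : x = y := by
  obtain ⟨k, hk⟩ := Real.Angle.angle_eq_iff_two_pi_dvd_sub.1 h
  obtain rfl : k = 0 := IsStrictOrderedRing.int_eq_of_mul_mem_Ioo two_pi_pos <| by
    rw [abs_lt, hk] at hxy
    simpa using hxy
  simpa [sub_eq_zero] using hk

lemma Complex.arg_div_eq_arg_sub_arg {a b : ℂ} (ha : a ≠ 0) (hb : b ≠ 0)
    (h : |arg (a / b)| + |arg a| + |arg b| < 2 * π) : arg (a / b) = arg a - arg b := by
  refine Real.Angle.eq_of_coe_eq_of_abs_sub_lt_two_pi ?_ ?_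
  · rw [arg_div_coe_angle ha hb, Real.Angle.coe_sub]
  · calc |arg (a / b) - (arg a - arg b)| ≤ |arg (a / b)| + (|arg a| + |arg b|) :=
          (abs_sub _ _).trans (add_le_add_right (abs_sub _ _) _)
      _ < 2 * π := by linarith

lemma Real.exists_abs_sub_le_half_of_abs_sub_le {S : Set ℝ} {θ : ℝ}
    (h : ∀ x ∈ S, ∀ y ∈ S, |x - y| ≤ θ) : ∃ c, ∀ x ∈ S, |x - c| ≤ θ / 2 := by
  rcases S.eq_empty_or_nonempty with rfl | hne
  · exact ⟨0, by simp⟩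
  obtain ⟨x₀, hx₀⟩ := hne
  have hbdd : BddBelow S := ⟨x₀ - θ, fun x hx => by linarith [(abs_le.1 (h x₀ hx₀ x hx)).2]⟩
  have hlow : ∀ x ∈ S, sInf S ≤ x := fun x hx => csInf_le hbdd hx
  have hhigh : ∀ x ∈ S, x - θ ≤ sInf S := fun x hx =>
    le_csInf ⟨x₀, hx₀⟩ fun y hy => by linarith [(abs_le.1 (h x hx y hy)).2]
  refine ⟨sInf S + θ / 2, fun x hx => abs_le.2 ⟨?_, ?_⟩⟩ <;> linarith [hlow x hx, hhigh x hx]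

lemma zero_notMem_convexHull_of_forall_pos {𝕜 E : Type*} [Field 𝕜] [LinearOrder 𝕜]
    [IsStrictOrderedRing 𝕜] [AddCommGroup E] [Module 𝕜 E] {s : Set E} (f : E →ₗ[𝕜] 𝕜)
    (h : ∀ x ∈ s, 0 < f x) : (0 : E) ∉ convexHull 𝕜 s := fun h0 =>
  (f.map_zero ▸ convexHull_min h (convex_halfSpace_gt f.isLinear 0) h0 : (0 : 𝕜) < 0).false

lemma Complex.re_mul_exp_neg_pos {u : ℂ} (hu : u ≠ 0) {φ : ℝ} (h : |arg u - φ| < π / 2) :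
    0 < (u * exp (-(φ * I))).re := by
  have hrot : u * exp (-(φ * I)) = ‖u‖ * exp ((arg u - φ : ℝ) * I) := by
    conv_lhs => rw [← norm_mul_exp_arg_mul_I u]
    rw [mul_assoc, ← exp_add]
    push_cast
    ring_nf
  rw [hrot, re_ofReal_mul, exp_ofReal_mul_I_re]
  exact mul_pos (norm_pos_iff.2 hu) (Real.cos_pos_of_mem_Ioo (abs_lt.1 h))

theorem stmt5_general (Z : Set ℂ) (hZ : ∀ z ∈ Z, z ≠ 0)
    (θ : ℝ) (hθ1 : θ < 2 * Real.pi / 3)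
    (hang : ∀ u ∈ Z, ∀ v ∈ Z, cangle u v ≤ θ) :
    (0 : ℂ) ∉ convexHull ℝ Z := by
  intro h0
  obtain ⟨z₀, hz₀⟩ : Z.Nonempty := convexHull_nonempty_iff.1 ⟨0, h0⟩
  have hz₀0 := hZ z₀ hz₀
  have harg : ∀ u ∈ Z, ∀ v ∈ Z, |arg (u / v)| ≤ θ := fun u hu v hv =>
    cangle_eq_abs_arg (hZ u hu) (hZ v hv) ▸ hang u hu v hv
  have hrel : ∀ x ∈ (fun z => arg (z / z₀)) '' Z, ∀ y ∈ (fun z => arg (z / z₀)) '' Z,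
      |x - y| ≤ θ := by
    rintro _ ⟨u, hu, rfl⟩ _ ⟨v, hv, rfl⟩
    have huv : u / z₀ / (v / z₀) = u / v := div_div_div_cancel_right₀ hz₀0 _ _
    rw [← arg_div_eq_arg_sub_arg (div_ne_zero (hZ u hu) hz₀0) (div_ne_zero (hZ v hv) hz₀0),
      huv]
    · exact harg u hu v hv
    · rw [huv]
      linarith [harg u hu v hv, harg u hu z₀ hz₀, harg v hv z₀ hz₀]
  obtain ⟨φ, hφ⟩ := Real.exists_abs_sub_le_half_of_abs_sub_le hrel
  refine zero_notMem_convexHull_of_forall_pos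
    (reLm.comp (LinearMap.mulLeft ℝ (z₀⁻¹ * exp (-(φ * I))))) (fun z hz => ?_) h0
  have hpos := re_mul_exp_neg_pos (div_ne_zero (hZ z hz) hz₀0) (φ := φ)
    (by linarith [hφ _ (mem_image_of_mem _ hz), Real.pi_pos])
  change 0 < (z₀⁻¹ * exp (-(φ * I)) * z).re
  rwa [mul_right_comm, mul_comm z₀⁻¹, ← div_eq_mul_inv]

/-- If `Z ⊂ ℂ` is a set of non-zero complex numbers such that the angle between any two
elements of `Z` is at most `θ` for some `0 ≤ θ < 2π/3`, then `0` does not lie in the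
convex hull of `Z` (regarded as a subset of `ℝ² = ℂ`). -/
theorem stmt5 (Z : Set ℂ) (hZ : ∀ z ∈ Z, z ≠ 0)
    (θ : ℝ) (hθ0 : 0 ≤ θ) (hθ1 : θ < 2 * Real.pi / 3)
    (hang : ∀ u ∈ Z, ∀ v ∈ Z, cangle u v ≤ θ) :
    (0 : ℂ) ∉ convexHull ℝ Z :=
  stmt5_general Z hZ θ hθ1 hang
end

section
/- Let 𝒮 ⊂ ℳ be a (possibly infinite) set and let μ_B ∈ ℂ ∖ {0} for every B ∈ 𝒮, and define f: ℳ → ℂ by f(A) = ∑_{B ∈ 𝒮} μ_B ind(B, A) (for each A ∈ ℳ only finitely many summands are non-zero, so f is well-defined). Suppose f(A_1 ⊕ A_2) = f(A_1) + f(A_2) for any two matrices A_1, A_2 ∈ ℳ such that A_1 ⊕ A_2 is defined. Then every B ∈ 𝒮 is connected, i.e., cannot be written as B = B_1 ⊕ B_2 for some B_1, B_2 ∈ ℳ. -/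
/-!
Induct on `|R| + |C|`. If `B = B₁ ⊕ B₂ ∈ 𝒮`, then for every `b ∈ 𝒮` we have
`ind(b, B) = ind(b, B₁) + ind(b, B₂)` unless `b` lies in `B` without lying in `B₁` or `B₂`;
such a `b` meets the columns of both summands and splits along them, so it is disconnected.
By induction it is then not smaller than `B`, and a submatrix of `B` of the same size is `B`
itself. Hence `f(B) - f(B₁) - f(B₂)` reduces to the single term `μ_B (1 - 0 - 0) = μ_B ≠ 0`.
-/

/-- The class `ℳ` of integer matrices whose rows and columns are indexed by non-empty
finite subsets `R, C ⊂ ℕ`, with no zero rows and no zero columns.  The entries are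
encoded by a total function `ℕ → ℕ → ℤ` vanishing outside `R × C`. -/
structure MMat where
  R : Finset ℕ
  C : Finset ℕ
  hR : R.Nonempty
  hC : C.Nonempty
  entry : ℕ → ℕ → ℤ
  supp : ∀ i j, entry i j ≠ 0 → i ∈ R ∧ j ∈ C
  noZeroRow : ∀ i ∈ R, ∃ j ∈ C, entry i j ≠ 0
  noZeroCol : ∀ j ∈ C, ∃ i ∈ R, entry i j ≠ 0

namespace MMat

open Classical in
/-- The finite set `X_A` of (5.1.2): vectors `(ξ_j : j ∈ C)` with `0 ≤ ξ_j ≤ ν_j` and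
`∑_{j ∈ C} A(i,j) ξ_j = 0` for all `i ∈ R`. -/
noncomputable def solSet (A : MMat) (ν : ℕ → ℕ) : Finset ((j : ℕ) → j ∈ A.C → ℕ) :=
  (A.C.pi fun j => Finset.range (ν j + 1)).filter
    (fun ξ => ∀ i ∈ A.R, ∑ j ∈ A.C.attach, A.entry i j.1 * (ξ j.1 j.2 : ℤ) = 0)

/-- The polynomial `w(X_A; ζ) = ∑_{x ∈ X_A} ∏_{j ∈ C} (ζ w_j)^{ξ_j}` of (5.1.3),
as a polynomial in `ζ`. -/
noncomputable def wPoly (A : MMat) (w : ℕ → ℂ) (ν : ℕ → ℕ) : Polynomial ℂ :=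
  ∑ ξ ∈ A.solSet ν, ∏ j ∈ A.C.attach, (Polynomial.C (w j.1) * Polynomial.X) ^ (ξ j.1 j.2)

/-- The power sums `σ_k(A, w, ν) = ζ_1^{-k} + ⋯ + ζ_d^{-k}` of (5.1.1), where
`ζ_1, …, ζ_d` are the roots of `w(X_A; ζ)`, listed with multiplicity. -/
noncomputable def sigma (A : MMat) (w : ℕ → ℂ) (ν : ℕ → ℕ) (k : ℕ) : ℂ :=
  ((A.wPoly w ν).roots.map fun ζ => ζ⁻¹ ^ k).sum

/-- The direct sum `A₁ ⊕ A₂` of two matrices in `ℳ` with disjoint row index sets and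
disjoint column index sets. -/
def dsum (A₁ A₂ : MMat) (hR : Disjoint A₁.R A₂.R) (hC : Disjoint A₁.C A₂.C) : MMat where
  R := A₁.R ∪ A₂.R
  C := A₁.C ∪ A₂.C
  hR := A₁.hR.mono Finset.subset_union_left
  hC := A₁.hC.mono Finset.subset_union_left
  entry := fun i j => A₁.entry i j + A₂.entry i j
  supp := by
    intro i j h
    by_cases h₁ : A₁.entry i j = 0
    · have h₂ : A₂.entry i j ≠ 0 := by
        intro h₂; exact h (by simp [h₁, h₂])
      obtain ⟨hi, hj⟩ := A₂.supp i j h₂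
      exact ⟨Finset.mem_union_right _ hi, Finset.mem_union_right _ hj⟩
    · obtain ⟨hi, hj⟩ := A₁.supp i j h₁
      exact ⟨Finset.mem_union_left _ hi, Finset.mem_union_left _ hj⟩
  noZeroRow := by
    intro i hi
    rcases Finset.mem_union.mp hi with hi₁ | hi₂
    · obtain ⟨j, hj, hne⟩ := A₁.noZeroRow i hi₁
      refine ⟨j, Finset.mem_union_left _ hj, ?_⟩
      have h₂ : A₂.entry i j = 0 := by
        by_contra h₂
        exact Finset.disjoint_left.mp hR hi₁ (A₂.supp i j h₂).1
      simpa [h₂] using hne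
    · obtain ⟨j, hj, hne⟩ := A₂.noZeroRow i hi₂
      refine ⟨j, Finset.mem_union_right _ hj, ?_⟩
      have h₁ : A₁.entry i j = 0 := by
        by_contra h₁
        exact Finset.disjoint_left.mp hR (A₁.supp i j h₁).1 hi₂
      simpa [h₁] using hne
  noZeroCol := by
    intro j hj
    rcases Finset.mem_union.mp hj with hj₁ | hj₂
    · obtain ⟨i, hi, hne⟩ := A₁.noZeroCol j hj₁
      refine ⟨i, Finset.mem_union_left _ hi, ?_⟩
      have h₂ : A₂.entry i j = 0 := by
        by_contra h₂
        exact Finset.disjoint_left.mp hR hi (A₂.supp i j h₂).1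
      simpa [h₂] using hne
    · obtain ⟨i, hi, hne⟩ := A₂.noZeroCol j hj₂
      refine ⟨i, Finset.mem_union_right _ hi, ?_⟩
      have h₁ : A₁.entry i j = 0 := by
        by_contra h₁
        exact Finset.disjoint_left.mp hR (A₁.supp i j h₁).1 hi
      simpa [h₁] using hne

open Classical in
/-- The index `ind(B, A)` of Section 5.1: `ind(B, A) = 1` if `R₁ ⊆ R`, `C₁ ⊆ C`,
`A` agrees with `B` on `R₁ × C₁` and `A` vanishes on `(R ∖ R₁) × C₁`; otherwise `0`. -/
noncomputable def ind (B A : MMat) : ℂ :=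
  if B.R ⊆ A.R ∧ B.C ⊆ A.C ∧ (∀ i ∈ B.R, ∀ j ∈ B.C, A.entry i j = B.entry i j) ∧
      (∀ i ∈ A.R, i ∉ B.R → ∀ j ∈ B.C, A.entry i j = 0)
    then 1 else 0

open Classical in
/-- The connected sum `B₁ # B₂`: the matrix equal to `B₁` on `R₁ × C₁`, to `B₂` on
`R₂ × C₂`, and zero elsewhere (well-defined when the restrictions of `B₁` and `B₂` to
`(R₁ ∩ R₂) × (C₁ ∩ C₂)` coincide). -/
noncomputable def csum (B₁ B₂ : MMat) : MMat where
  R := B₁.R ∪ B₂.R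
  C := B₁.C ∪ B₂.C
  hR := B₁.hR.mono Finset.subset_union_left
  hC := B₁.hC.mono Finset.subset_union_left
  entry := fun i j => if i ∈ B₁.R ∧ j ∈ B₁.C then B₁.entry i j else B₂.entry i j
  supp := by
    intro i j h
    by_cases h₁ : i ∈ B₁.R ∧ j ∈ B₁.C
    · exact ⟨Finset.mem_union_left _ h₁.1, Finset.mem_union_left _ h₁.2⟩
    · have h' : B₂.entry i j ≠ 0 := by simpa [if_neg h₁] using h
      obtain ⟨hi, hj⟩ := B₂.supp i j h'
      exact ⟨Finset.mem_union_right _ hi, Finset.mem_union_right _ hj⟩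
  noZeroRow := by
    intro i hi
    by_cases hi₁ : i ∈ B₁.R
    · obtain ⟨j, hj, hne⟩ := B₁.noZeroRow i hi₁
      exact ⟨j, Finset.mem_union_left _ hj, by simpa [hi₁, hj] using hne⟩
    · have hi₂ : i ∈ B₂.R := by
        rcases Finset.mem_union.mp hi with h | h
        · exact absurd h hi₁
        · exact h
      obtain ⟨j, hj, hne⟩ := B₂.noZeroRow i hi₂
      exact ⟨j, Finset.mem_union_right _ hj, by simpa [hi₁] using hne⟩
  noZeroCol := by
    intro j hj
    by_cases hj₁ : j ∈ B₁.C
    · obtain ⟨i, hi, hne⟩ := B₁.noZeroCol j hj₁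
      exact ⟨i, Finset.mem_union_left _ hi, by simpa [hi, hj₁] using hne⟩
    · have hj₂ : j ∈ B₂.C := by
        rcases Finset.mem_union.mp hj with h | h
        · exact absurd h hj₁
        · exact h
      obtain ⟨i, hi, hne⟩ := B₂.noZeroCol j hj₂
      exact ⟨i, Finset.mem_union_right _ hi, by simpa [hj₁] using hne⟩

/-- A matrix `B ∈ ℳ` is connected if it cannot be written as a direct sum
`B = B₁ ⊕ B₂` of two matrices in `ℳ`. -/
def Connected (B : MMat) : Prop :=
  ¬ ∃ (B₁ B₂ : MMat) (h₁ : Disjoint B₁.R B₂.R) (h₂ : Disjoint B₁.C B₂.C),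
      B = dsum B₁ B₂ h₁ h₂

end MMat

theorem finsum_mem_eq_add_finsum_mem_sdiff_singleton {α M : Type*} [AddCommMonoid M]
    {f : α → M} {s : Set α} {a : α} (ha : a ∈ s)
    (hf : (s \ {a} ∩ Function.support f).Finite) :
    ∑ᶠ x ∈ s, f x = f a + ∑ᶠ x ∈ s \ {a}, f x := by
  conv_lhs => rw [← Set.insert_sdiff_self_of_mem ha]
  exact finsum_mem_insert' f (fun h => h.2 rfl) hf

namespace MMat

open Finset

protected theorem ext {A B : MMat} (hR : A.R = B.R) (hC : A.C = B.C)
    (he : A.entry = B.entry) : A = B := by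
  cases A; cases B; cases hR; cases hC; cases he; rfl

theorem entry_eq_zero_of_notMem_R {A : MMat} {i j : ℕ} (h : i ∉ A.R) : A.entry i j = 0 :=
  by_contra fun h' => h (A.supp i j h').1

theorem entry_eq_zero_of_notMem_C {A : MMat} {i j : ℕ} (h : j ∉ A.C) : A.entry i j = 0 :=
  by_contra fun h' => h (A.supp i j h').2

theorem ind_ne_zero_iff {B A : MMat} :
    ind B A ≠ 0 ↔ B.R ⊆ A.R ∧ B.C ⊆ A.C ∧ ∀ i, ∀ j ∈ B.C, A.entry i j = B.entry i j := by
  have hcond : ((∀ i ∈ B.R, ∀ j ∈ B.C, A.entry i j = B.entry i j) ∧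
      ∀ i ∈ A.R, i ∉ B.R → ∀ j ∈ B.C, A.entry i j = 0) ↔
      ∀ i, ∀ j ∈ B.C, A.entry i j = B.entry i j := by
    refine ⟨fun ⟨hagree, hzero⟩ i j hj => ?_, fun h => ⟨fun i _ => h i,
      fun i _ hi j hj => (h i j hj).trans (entry_eq_zero_of_notMem_R hi)⟩⟩
    by_cases hi : i ∈ B.R
    · exact hagree i hi j hj
    by_cases hiA : i ∈ A.R
    · rw [hzero i hiA hi j hj, entry_eq_zero_of_notMem_R hi]
    · rw [entry_eq_zero_of_notMem_R hi, entry_eq_zero_of_notMem_R hiA]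
  simp only [ind, ne_eq, ite_eq_right_iff, one_ne_zero, imp_false, not_not]
  rw [hcond]

theorem ind_eq_one_of_ne_zero {B A : MMat} (h : ind B A ≠ 0) : ind B A = 1 := by
  unfold ind at *
  split_ifs at * <;> simp_all

theorem ind_self (B : MMat) : ind B B ≠ 0 :=
  ind_ne_zero_iff.2 ⟨subset_rfl, subset_rfl, fun _ _ _ => rfl⟩

def size (A : MMat) : ℕ := A.R.card + A.C.card

theorem size_lt_of_ind_ne_zero {B A : MMat} (h : ind B A ≠ 0) (hne : B ≠ A) :
    B.size < A.size := by
  obtain ⟨hR, hC, he⟩ := ind_ne_zero_iff.1 h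
  by_contra hle
  have hRcard := card_le_card hR
  have hCcard := card_le_card hC
  unfold size at hle
  have hR' : B.R = A.R := eq_of_subset_of_card_le hR (by omega)
  have hC' : B.C = A.C := eq_of_subset_of_card_le hC (by omega)
  refine hne (MMat.ext hR' hC' (funext₂ fun i j => ?_))
  by_cases hj : j ∈ B.C
  · exact (he i j hj).symm
  · rw [entry_eq_zero_of_notMem_C hj, entry_eq_zero_of_notMem_C (hC' ▸ hj)]

def IsBlock (B : MMat) (p q : ℕ → Prop) : Prop :=
  ∀ i j, B.entry i j ≠ 0 → (p i ↔ q j)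

theorem IsBlock.not {B : MMat} {p q : ℕ → Prop} (h : B.IsBlock p q) :
    B.IsBlock (fun i => ¬p i) (fun j => ¬q j) :=
  fun i j hne => not_congr (h i j hne)

theorem IsBlock.of_ind_ne_zero {B A : MMat} {p q : ℕ → Prop} (hA : A.IsBlock p q)
    (h : ind B A ≠ 0) : B.IsBlock p q := by
  intro i j hne
  apply hA
  rwa [(ind_ne_zero_iff.1 h).2.2 i j (B.supp i j hne).2]

open Classical in
noncomputable def restrict (B : MMat) (p q : ℕ → Prop) (hB : B.IsBlock p q)
    (hq : ∃ j ∈ B.C, q j) : MMat where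
  R := B.R.filter p
  C := B.C.filter q
  hR := by
    obtain ⟨j, hj, hqj⟩ := hq
    obtain ⟨i, hi, hne⟩ := B.noZeroCol j hj
    exact ⟨i, mem_filter.2 ⟨hi, (hB i j hne).2 hqj⟩⟩
  hC := by
    obtain ⟨j, hj, hqj⟩ := hq
    exact ⟨j, mem_filter.2 ⟨hj, hqj⟩⟩
  entry i j := if p i then B.entry i j else 0
  supp i j h := by
    by_cases hp : p i
    · rw [if_pos hp] at h
      obtain ⟨hi, hj⟩ := B.supp i j h
      exact ⟨mem_filter.2 ⟨hi, hp⟩, mem_filter.2 ⟨hj, (hB i j h).1 hp⟩⟩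
    · exact absurd (if_neg hp) h
  noZeroRow i hi := by
    obtain ⟨hi, hp⟩ := mem_filter.1 hi
    obtain ⟨j, hj, hne⟩ := B.noZeroRow i hi
    exact ⟨j, mem_filter.2 ⟨hj, (hB i j hne).1 hp⟩, by rwa [if_pos hp]⟩
  noZeroCol j hj := by
    obtain ⟨hj, hqj⟩ := mem_filter.1 hj
    obtain ⟨i, hi, hne⟩ := B.noZeroCol j hj
    have hp := (hB i j hne).2 hqj
    exact ⟨i, mem_filter.2 ⟨hi, hp⟩, by rwa [if_pos hp]⟩

theorem not_connected_of_isBlock {B : MMat} {p q : ℕ → Prop} (hB : B.IsBlock p q)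
    (hq : ∃ j ∈ B.C, q j) (hq' : ∃ j ∈ B.C, ¬q j) : ¬B.Connected := by
  refine not_not.2 ⟨B.restrict p q hB hq, B.restrict _ _ hB.not hq',
    disjoint_left.2 fun i hi hi' => ?_, disjoint_left.2 fun j hj hj' => ?_, MMat.ext ?_ ?_ ?_⟩
  · simp only [restrict, mem_filter] at hi hi'
    exact hi'.2 hi.2
  · simp only [restrict, mem_filter] at hj hj'
    exact hj'.2 hj.2
  · ext i
    simp only [restrict, dsum, mem_union, mem_filter]
    tauto
  · ext j
    simp only [restrict, dsum, mem_union, mem_filter]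
    tauto
  · funext i j
    by_cases hp : p i <;> simp [restrict, dsum, hp]

theorem dsum_comm (A₁ A₂ : MMat) (h₁ : Disjoint A₁.R A₂.R) (h₂ : Disjoint A₁.C A₂.C) :
    dsum A₁ A₂ h₁ h₂ = dsum A₂ A₁ h₁.symm h₂.symm :=
  MMat.ext (union_comm _ _) (union_comm _ _) (funext₂ fun _ _ => add_comm _ _)

theorem ind_eq_zero_of_disjoint_C {A₁ A₂ B : MMat} (hC : Disjoint A₁.C A₂.C)
    (h : ind B A₁ ≠ 0) : ind B A₂ = 0 := by
  by_contra h'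
  obtain ⟨j, hj⟩ := B.hC
  exact disjoint_left.1 hC ((ind_ne_zero_iff.1 h).2.1 hj) ((ind_ne_zero_iff.1 h').2.1 hj)

section dsum

variable {A₁ A₂ B : MMat} (h₁ : Disjoint A₁.R A₂.R) (h₂ : Disjoint A₁.C A₂.C)

theorem isBlock_dsum : (dsum A₁ A₂ h₁ h₂).IsBlock (· ∈ A₁.R) (· ∈ A₁.C) := by
  intro i j (hne : A₁.entry i j + A₂.entry i j ≠ 0)
  constructor
  · intro hi
    rw [entry_eq_zero_of_notMem_R (disjoint_left.1 h₁ hi), add_zero] at hne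
    exact (A₁.supp i j hne).2
  · intro hj
    rw [entry_eq_zero_of_notMem_C (disjoint_left.1 h₂ hj), add_zero] at hne
    exact (A₁.supp i j hne).1

theorem ind_dsum_left_eq_zero : ind (dsum A₁ A₂ h₁ h₂) A₁ = 0 := by
  by_contra h
  obtain ⟨j, hj⟩ := A₂.hC
  exact disjoint_right.1 h₂ hj ((ind_ne_zero_iff.1 h).2.1 (mem_union_right _ hj))

theorem ind_dsum_ne_zero_of_left (h : ind B A₁ ≠ 0) : ind B (dsum A₁ A₂ h₁ h₂) ≠ 0 := by
  obtain ⟨hR, hC, he⟩ := ind_ne_zero_iff.1 h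
  refine ind_ne_zero_iff.2 ⟨hR.trans subset_union_left, hC.trans subset_union_left,
    fun i j hj => ?_⟩
  show A₁.entry i j + A₂.entry i j = _
  rw [entry_eq_zero_of_notMem_C (disjoint_left.1 h₂ (hC hj)), add_zero, he i j hj]

theorem ind_ne_zero_of_ind_dsum_ne_zero (h : ind B (dsum A₁ A₂ h₁ h₂) ≠ 0)
    (hC : B.C ⊆ A₂.C) : ind B A₂ ≠ 0 := by
  obtain ⟨-, -, he⟩ := ind_ne_zero_iff.1 h
  have he₂ : ∀ i, ∀ j ∈ B.C, A₂.entry i j = B.entry i j := fun i j hj => by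
    rw [← he i j hj]
    show _ = A₁.entry i j + A₂.entry i j
    rw [entry_eq_zero_of_notMem_C (disjoint_right.1 h₂ (hC hj)), zero_add]
  refine ind_ne_zero_iff.2 ⟨fun i hi => ?_, hC, he₂⟩
  obtain ⟨j, hj, hne⟩ := B.noZeroRow i hi
  exact (A₂.supp i j (he₂ i j hj ▸ hne)).1

-- `B` meets the columns of both summands and splits along them.
theorem not_connected_of_ind_dsum_ne_zero (h : ind B (dsum A₁ A₂ h₁ h₂) ≠ 0)
    (hB₁ : ind B A₁ = 0) (hB₂ : ind B A₂ = 0) : ¬B.Connected := by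
  have hC := (ind_ne_zero_iff.1 h).2.1
  refine not_connected_of_isBlock ((isBlock_dsum h₁ h₂).of_ind_ne_zero h) ?_ ?_
  · by_contra! hcon
    exact ind_ne_zero_of_ind_dsum_ne_zero h₁ h₂ h
      (fun j hj => (mem_union.1 (hC hj)).resolve_left (hcon j hj)) hB₂
  · by_contra! hcon
    rw [dsum_comm] at h
    exact ind_ne_zero_of_ind_dsum_ne_zero h₁.symm h₂.symm h hcon hB₁

theorem ind_dsum_eq_add (hB : ind B (dsum A₁ A₂ h₁ h₂) ≠ 0 → B.Connected) :
    ind B (dsum A₁ A₂ h₁ h₂) = ind B A₁ + ind B A₂ := by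
  rcases eq_or_ne (ind B A₁) 0 with hB₁ | hB₁
  swap
  · rw [ind_eq_one_of_ne_zero (ind_dsum_ne_zero_of_left h₁ h₂ hB₁),
      ind_eq_one_of_ne_zero hB₁, ind_eq_zero_of_disjoint_C h₂ hB₁, add_zero]
  rcases eq_or_ne (ind B A₂) 0 with hB₂ | hB₂
  swap
  · rw [dsum_comm, ind_eq_one_of_ne_zero (ind_dsum_ne_zero_of_left h₁.symm h₂.symm hB₂),
      ind_eq_one_of_ne_zero hB₂, ind_eq_zero_of_disjoint_C h₂.symm hB₂, zero_add]
  rw [hB₁, hB₂, add_zero]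
  by_contra h
  exact not_connected_of_ind_dsum_ne_zero h₁ h₂ h hB₁ hB₂ (hB h)

end dsum

end MMat

/-- **Lemma 5.4.** Let `𝒮 ⊆ ℳ` and `μ_B ≠ 0` for `B ∈ 𝒮`, and let
`f(A) = ∑_{B ∈ 𝒮} μ_B ind(B, A)` (for each `A ∈ ℳ` only finitely many summands are
non-zero).  If `f(A₁ ⊕ A₂) = f(A₁) + f(A₂)` whenever `A₁ ⊕ A₂` is defined, then every
`B ∈ 𝒮` is connected. -/
theorem stmt19 (S : Set MMat) (μ : MMat → ℂ) (hμ : ∀ B ∈ S, μ B ≠ 0)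
    (hfin : ∀ A : MMat, {B : MMat | B ∈ S ∧ MMat.ind B A ≠ 0}.Finite)
    (f : MMat → ℂ)
    (hf : ∀ A : MMat, f A = ∑ᶠ (B : MMat) (_ : B ∈ S), μ B * MMat.ind B A)
    (hadd : ∀ (A₁ A₂ : MMat) (h₁ : Disjoint A₁.R A₂.R) (h₂ : Disjoint A₁.C A₂.C),
      f (MMat.dsum A₁ A₂ h₁ h₂) = f A₁ + f A₂) :
    ∀ B ∈ S, MMat.Connected B := by
  intro B hB
  induction hn : B.size using Nat.strong_induction_on generalizing B with
  | _ n ih =>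
  rintro ⟨B₁, B₂, h₁, h₂, rfl⟩
  have hadd_A := hadd B₁ B₂ h₁ h₂
  set A := MMat.dsum B₁ B₂ h₁ h₂
  set g : MMat → MMat → ℂ := fun X b => μ b * MMat.ind b X
  have hsupp : ∀ X, (S \ {A} ∩ Function.support (g X)).Finite := fun X =>
    (hfin X).subset fun b ⟨⟨hb, _⟩, hne⟩ => ⟨hb, right_ne_zero_of_mul hne⟩
  have hsplit : ∀ X, f X = g X A + ∑ᶠ b ∈ S \ {A}, g X b := fun X => by
    rw [hf, finsum_mem_eq_add_finsum_mem_sdiff_singleton hB (hsupp X)]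
  -- every `b ∈ S` other than `A` that sits in `A` is smaller, hence connected by induction
  have hadd_sdiff : ∑ᶠ b ∈ S \ {A}, g A b =
      ∑ᶠ b ∈ S \ {A}, g B₁ b + ∑ᶠ b ∈ S \ {A}, g B₂ b := by
    rw [← finsum_mem_add_distrib' (hsupp _) (hsupp _)]
    refine finsum_mem_congr rfl fun b ⟨hb, hbA⟩ => ?_
    simp only [g, ← mul_add]
    rw [← MMat.ind_dsum_eq_add]
    exact fun hbA' => ih _ (hn ▸ MMat.size_lt_of_ind_ne_zero hbA' hbA) b hb rfl
  rw [hsplit, hsplit B₁, hsplit B₂, hadd_sdiff] at hadd_A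
  have hAA : g A A = μ A := by
    simp only [g, MMat.ind_eq_one_of_ne_zero (MMat.ind_self A), mul_one]
  have hB₁A : g B₁ A = 0 := by simp only [g, A, MMat.ind_dsum_left_eq_zero, mul_zero]
  have hB₂A : g B₂ A = 0 := by
    simp only [g, A]
    rw [MMat.dsum_comm, MMat.ind_dsum_left_eq_zero, mul_zero]
  exact hμ A hB (by linear_combination hadd_A - hAA + hB₁A + hB₂A)
end
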